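/- For every positive integer d and every partition λ of d: (a) for m = 2, −(1/4) · (coefficient of y^3 in ∏_{i=1}^{2}(1+(d−i+1/2)y) · ∏_{i=1}^{d}(1−(2+λ̃_i)y)·(1−λ̃_i y)^{−1}) = p_2(λ)/2; (b) for m = 3, −(1/9) · (coefficient of y^4 in ∏_{i=1}^{3}(1+(d−i+1/2)y) · ∏_{i=1}^{d}(1−(3+λ̃_i)y)·(1−λ̃_i y)^{−1}) = p_3(λ)/3 − p_1(λ)²/2 + (5/12)p_1(λ); (c) for m = 4, −(1/16) · (coefficient of y^5 in ∏_{i=1}^{4}(1+(d−i+1/2)y) · ∏_{i=1}^{d}(1−(4+λ̃_i)y)·(1−λ̃_i y)^{−1}) = p_4(λ)/4 − p_1(λ)p_2(λ) + (11/8)p_2(λ). -/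

import Mathlib

open Finset

/-- The shifted parts `λ̃ᵢ = λᵢ - i + 1/2` of a partition (zero-based index). -/
noncomputable def shiftedPart (d : ℕ) (lam : Fin d → ℕ) (i : Fin d) : ℚ :=
  (lam i : ℚ) - ((i : ℕ) + 1) + 1 / 2

/-- The shifted power sum `p_k(λ) = Σᵢ (λ̃ᵢ^k − (−i+1/2)^k)`. -/
noncomputable def shiftedPowerSum (d : ℕ) (lam : Fin d → ℕ) (k : ℕ) : ℚ :=
  ∑ i : Fin d, (shiftedPart d lam i ^ k - (-(((i : ℕ) : ℚ) + 1) + 1 / 2) ^ k)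

/-- `f^{(m)}(λ) = −(1/m²) · [y^{m+1}] ∏_{i=1}^{m}(1+(d−i+1/2)y) ·
∏_{i=1}^{d}(1−(m+λ̃ᵢ)y)·(1−λ̃ᵢ y)⁻¹` in `ℚ[[y]]`. -/
noncomputable def charValue (m d : ℕ) (lam : Fin d → ℕ) : ℚ :=
  -(1 / (m : ℚ) ^ 2) * (PowerSeries.coeff (R := ℚ) (m + 1))
    ((∏ t : Fin m, (1 + PowerSeries.C (R := ℚ) ((d : ℚ) - ((t : ℕ) + 1) + 1 / 2) * PowerSeries.X)) *
      ∏ i : Fin d,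
        ((1 - PowerSeries.C (R := ℚ) ((m : ℚ) + shiftedPart d lam i) * PowerSeries.X) *
          (1 - PowerSeries.C (R := ℚ) (shiftedPart d lam i) * PowerSeries.X)⁻¹))

/-!
Each factor `(1 - (m + c) y)(1 - c y)⁻¹` equals `1 - m (y + c y² + c² y³ + ⋯)`, so multiplying the
factors in one at a time expresses the first six coefficients of `∏ᵢ (1 - (m + λ̃ᵢ) y)(1 - λ̃ᵢ y)⁻¹`
as polynomials in `m`, `d` and the power sums `Σᵢ λ̃ᵢ^k`. These power sums differ from `p_k(λ)` by
the power sums `Σ_{i ≤ d} (1/2 - i)^k` of the empty partition, which are polynomials in `d`, and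
`p_1(λ) = |λ| = d`. Multiplying by the `m` linear factors in front and reading off the coefficient
of `y^(m+1)` then leaves a polynomial identity in `d` and the `p_k(λ)`.
-/

open PowerSeries

section ShiftQuot

variable {K : Type*} [Field K]

theorem inv_one_sub_C_mul_X (c : K) : (1 - C c * X)⁻¹ = mk fun n => c ^ n := by
  rw [PowerSeries.inv_eq_iff_mul_eq_one (by simp)]
  ext (_ | n)
  · simp
  · simp [mul_sub, ← mul_assoc, pow_succ, mul_comm]

noncomputable def shiftQuot (m c : K) : K⟦X⟧ := (1 - C (m + c) * X) * (1 - C c * X)⁻¹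

theorem coeff_shiftQuot (m c : K) (n : ℕ) :
    coeff n (shiftQuot m c) = if n = 0 then 1 else -m * c ^ (n - 1) := by
  rw [shiftQuot, inv_one_sub_C_mul_X]
  rcases n with _ | n
  · simp
  · rw [sub_mul, one_mul, map_sub, mul_assoc, coeff_C_mul, coeff_succ_X_mul]
    simp only [coeff_mk, if_neg n.succ_ne_zero, Nat.add_sub_cancel]
    ring

theorem coeff_succ_shiftQuot_mul (m c : K) (F : K⟦X⟧) (n : ℕ) :
    coeff (n + 1) (shiftQuot m c * F) =
      coeff (n + 1) F - m * ∑ j ∈ range (n + 1), c ^ j * coeff (n - j) F := by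
  rw [coeff_mul, Nat.sum_antidiagonal_eq_sum_range_succ_mk, sum_range_succ', mul_sum]
  simp only [coeff_shiftQuot, if_pos, if_neg (Nat.succ_ne_zero _), Nat.add_sub_cancel,
    Nat.add_sub_add_right, Nat.sub_zero, one_mul, sub_eq_neg_add, ← sum_neg_distrib]
  congr 1
  exact sum_congr rfl fun j _ => by ring

end ShiftQuot

def powerSum {ι R : Type*} [CommSemiring R] (s : Finset ι) (c : ι → R) (k : ℕ) : R :=
  ∑ i ∈ s, c i ^ k

theorem powerSum_cons {ι R : Type*} [CommSemiring R] (s : Finset ι) (c : ι → R) (a : ι)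
    (ha : a ∉ s) (k : ℕ) : powerSum (s.cons a ha) c k = c a ^ k + powerSum s c k :=
  sum_cons ha

section ProdShiftQuot

variable {ι K : Type*} [Field K] (m : K) (s : Finset ι) (c : ι → K)

theorem coeff_zero_prod_shiftQuot : coeff 0 (∏ i ∈ s, shiftQuot m (c i)) = 1 := by
  simp [coeff_zero_eq_constantCoeff, map_prod, ← coeff_zero_eq_constantCoeff_apply,
    coeff_shiftQuot]

theorem coeff_one_prod_shiftQuot : coeff 1 (∏ i ∈ s, shiftQuot m (c i)) = -m * #s := by
  induction s using Finset.cons_induction with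
  | empty => simp
  | cons a s ha ih =>
    rw [prod_cons, coeff_succ_shiftQuot_mul]
    simp only [sum_range_succ, sum_range_zero, Nat.reduceSub, ih, coeff_zero_prod_shiftQuot,
      card_cons]
    push_cast
    ring

theorem coeff_two_prod_shiftQuot [CharZero K] :
    coeff 2 (∏ i ∈ s, shiftQuot m (c i)) =
      -m * powerSum s c 1 - m ^ 2 * #s / 2 + m ^ 2 * #s ^ 2 / 2 := by
  induction s using Finset.cons_induction with
  | empty => simp [powerSum]
  | cons a s ha ih =>
    rw [prod_cons, coeff_succ_shiftQuot_mul]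
    simp only [sum_range_succ, sum_range_zero, Nat.reduceSub, ih, coeff_zero_prod_shiftQuot,
      coeff_one_prod_shiftQuot, card_cons, powerSum_cons]
    push_cast
    ring

theorem coeff_three_prod_shiftQuot [CharZero K] :
    coeff 3 (∏ i ∈ s, shiftQuot m (c i)) =
      -m * powerSum s c 2 - m ^ 2 * powerSum s c 1 + m ^ 2 * #s * powerSum s c 1
        - m ^ 3 * #s / 3 + m ^ 3 * #s ^ 2 / 2 - m ^ 3 * #s ^ 3 / 6 := by
  induction s using Finset.cons_induction with
  | empty => simp [powerSum]
  | cons a s ha ih =>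
    rw [prod_cons, coeff_succ_shiftQuot_mul]
    simp only [sum_range_succ, sum_range_zero, Nat.reduceSub, ih, coeff_zero_prod_shiftQuot,
      coeff_one_prod_shiftQuot, coeff_two_prod_shiftQuot, card_cons, powerSum_cons]
    push_cast
    ring

theorem coeff_four_prod_shiftQuot [CharZero K] :
    coeff 4 (∏ i ∈ s, shiftQuot m (c i)) =
      -m * powerSum s c 3 - 3 / 2 * m ^ 2 * powerSum s c 2 + m ^ 2 * powerSum s c 1 ^ 2 / 2
        + m ^ 2 * #s * powerSum s c 2 - m ^ 3 * powerSum s c 1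
        + 3 / 2 * m ^ 3 * #s * powerSum s c 1 - m ^ 3 * #s ^ 2 * powerSum s c 1 / 2
        - m ^ 4 * #s / 4 + 11 / 24 * m ^ 4 * #s ^ 2 - m ^ 4 * #s ^ 3 / 4 + m ^ 4 * #s ^ 4 / 24 := by
  induction s using Finset.cons_induction with
  | empty => simp [powerSum]
  | cons a s ha ih =>
    rw [prod_cons, coeff_succ_shiftQuot_mul]
    simp only [sum_range_succ, sum_range_zero, Nat.reduceSub, ih, coeff_zero_prod_shiftQuot,
      coeff_one_prod_shiftQuot, coeff_two_prod_shiftQuot, coeff_three_prod_shiftQuot, card_cons,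
      powerSum_cons]
    push_cast
    ring

theorem coeff_five_prod_shiftQuot [CharZero K] :
    coeff 5 (∏ i ∈ s, shiftQuot m (c i)) =
      -m * powerSum s c 4 - 2 * m ^ 2 * powerSum s c 3 + m ^ 2 * powerSum s c 1 * powerSum s c 2
        + m ^ 2 * #s * powerSum s c 3 - 2 * m ^ 3 * powerSum s c 2 + m ^ 3 * powerSum s c 1 ^ 2
        + 2 * m ^ 3 * #s * powerSum s c 2 - m ^ 3 * #s * powerSum s c 1 ^ 2 / 2
        - m ^ 3 * #s ^ 2 * powerSum s c 2 / 2 - m ^ 4 * powerSum s c 1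
        + 11 / 6 * m ^ 4 * #s * powerSum s c 1 - m ^ 4 * #s ^ 2 * powerSum s c 1
        + m ^ 4 * #s ^ 3 * powerSum s c 1 / 6
        - m ^ 5 * #s / 5 + 5 / 12 * m ^ 5 * #s ^ 2 - 7 / 24 * m ^ 5 * #s ^ 3
        + m ^ 5 * #s ^ 4 / 12 - m ^ 5 * #s ^ 5 / 120 := by
  induction s using Finset.cons_induction with
  | empty => simp [powerSum]
  | cons a s ha ih =>
    rw [prod_cons, coeff_succ_shiftQuot_mul]
    simp only [sum_range_succ, sum_range_zero, Nat.reduceSub, ih, coeff_zero_prod_shiftQuot,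
      coeff_one_prod_shiftQuot, coeff_two_prod_shiftQuot, coeff_three_prod_shiftQuot,
      coeff_four_prod_shiftQuot, card_cons, powerSum_cons]
    push_cast
    ring

end ProdShiftQuot

theorem coeff_succ_one_add_C_mul_X_mul {R : Type*} [Semiring R] (a : R) (F : R⟦X⟧) (n : ℕ) :
    coeff (n + 1) ((1 + C a * X) * F) = coeff (n + 1) F + a * coeff n F := by
  rw [add_mul, one_mul, map_add, mul_assoc, coeff_C_mul, coeff_succ_X_mul]

section Partition

variable (d : ℕ) {lam : Fin d → ℕ}

theorem sum_neg_succ_add_half :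
    ∑ i : Fin d, (-(((i : ℕ) : ℚ) + 1) + 1 / 2) = -(d : ℚ) ^ 2 / 2 := by
  rw [Fin.sum_univ_eq_sum_range (fun i : ℕ => -((i : ℚ) + 1) + 1 / 2)]
  exact sum_range_induction _ (fun n : ℕ => -(n : ℚ) ^ 2 / 2) (by simp) d
    (fun n _ => by push_cast; ring)

theorem sum_neg_succ_add_half_sq :
    ∑ i : Fin d, (-(((i : ℕ) : ℚ) + 1) + 1 / 2) ^ 2 = (d : ℚ) ^ 3 / 3 - d / 12 := by
  rw [Fin.sum_univ_eq_sum_range (fun i : ℕ => (-((i : ℚ) + 1) + 1 / 2) ^ 2)]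
  exact sum_range_induction _ (fun n : ℕ => (n : ℚ) ^ 3 / 3 - n / 12) (by simp) d
    (fun n _ => by push_cast; ring)

theorem sum_neg_succ_add_half_pow_three :
    ∑ i : Fin d, (-(((i : ℕ) : ℚ) + 1) + 1 / 2) ^ 3 = (d : ℚ) ^ 2 / 8 - (d : ℚ) ^ 4 / 4 := by
  rw [Fin.sum_univ_eq_sum_range (fun i : ℕ => (-((i : ℚ) + 1) + 1 / 2) ^ 3)]
  exact sum_range_induction _ (fun n : ℕ => (n : ℚ) ^ 2 / 8 - (n : ℚ) ^ 4 / 4) (by simp) d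
    (fun n _ => by push_cast; ring)

theorem sum_neg_succ_add_half_pow_four :
    ∑ i : Fin d, (-(((i : ℕ) : ℚ) + 1) + 1 / 2) ^ 4 =
      (d : ℚ) ^ 5 / 5 - (d : ℚ) ^ 3 / 6 + 7 * d / 240 := by
  rw [Fin.sum_univ_eq_sum_range (fun i : ℕ => (-((i : ℚ) + 1) + 1 / 2) ^ 4)]
  exact sum_range_induction _ (fun n : ℕ => (n : ℚ) ^ 5 / 5 - (n : ℚ) ^ 3 / 6 + 7 * n / 240)
    (by simp) d (fun n _ => by push_cast; ring)

variable {d}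

theorem charValue_eq_coeff_mul_prod_shiftQuot (m : ℕ) :
    charValue m d lam = -(1 / (m : ℚ) ^ 2) * coeff (m + 1)
      ((∏ t : Fin m, (1 + C ((d : ℚ) - ((t : ℕ) + 1) + 1 / 2) * X)) *
        ∏ i, shiftQuot (m : ℚ) (shiftedPart d lam i)) :=
  rfl

theorem powerSum_shiftedPart (k : ℕ) :
    powerSum univ (shiftedPart d lam) k =
      shiftedPowerSum d lam k + ∑ i : Fin d, (-(((i : ℕ) : ℚ) + 1) + 1 / 2) ^ k := by
  rw [powerSum, shiftedPowerSum, sum_sub_distrib, sub_add_cancel]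

theorem shiftedPowerSum_one (hsum : ∑ i, lam i = d) : shiftedPowerSum d lam 1 = d := by
  calc shiftedPowerSum d lam 1 = ∑ i, (lam i : ℚ) :=
        sum_congr rfl fun i _ => by rw [shiftedPart]; ring
    _ = d := mod_cast hsum

theorem charValue_two (hsum : ∑ i, lam i = d) :
    charValue 2 d lam = shiftedPowerSum d lam 2 / 2 := by
  rw [charValue_eq_coeff_mul_prod_shiftQuot, Fin.prod_univ_two, mul_assoc]
  simp only [coeff_succ_one_add_C_mul_X_mul, Nat.cast_ofNat, Nat.reduceAdd,
    Fin.coe_ofNat_eq_mod, Nat.reduceMod]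
  rw [coeff_three_prod_shiftQuot, coeff_two_prod_shiftQuot, coeff_one_prod_shiftQuot]
  simp only [card_univ, Fintype.card_fin, powerSum_shiftedPart, pow_one, shiftedPowerSum_one hsum,
    sum_neg_succ_add_half, sum_neg_succ_add_half_sq]
  ring

theorem charValue_three (hsum : ∑ i, lam i = d) :
    charValue 3 d lam =
      shiftedPowerSum d lam 3 / 3 - shiftedPowerSum d lam 1 ^ 2 / 2 +
        5 / 12 * shiftedPowerSum d lam 1 := by
  rw [charValue_eq_coeff_mul_prod_shiftQuot, Fin.prod_univ_three, mul_assoc, mul_assoc]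
  simp only [coeff_succ_one_add_C_mul_X_mul, Nat.cast_ofNat, Nat.reduceAdd,
    Fin.coe_ofNat_eq_mod, Nat.reduceMod]
  rw [coeff_four_prod_shiftQuot, coeff_three_prod_shiftQuot, coeff_two_prod_shiftQuot,
    coeff_one_prod_shiftQuot]
  simp only [card_univ, Fintype.card_fin, powerSum_shiftedPart, pow_one, shiftedPowerSum_one hsum,
    sum_neg_succ_add_half, sum_neg_succ_add_half_sq, sum_neg_succ_add_half_pow_three]
  ring

theorem charValue_four (hsum : ∑ i, lam i = d) :
    charValue 4 d lam =
      shiftedPowerSum d lam 4 / 4 - shiftedPowerSum d lam 1 * shiftedPowerSum d lam 2 +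
        11 / 8 * shiftedPowerSum d lam 2 := by
  rw [charValue_eq_coeff_mul_prod_shiftQuot, Fin.prod_univ_four, mul_assoc, mul_assoc, mul_assoc]
  simp only [coeff_succ_one_add_C_mul_X_mul, Nat.cast_ofNat, Nat.reduceAdd,
    Fin.coe_ofNat_eq_mod, Nat.reduceMod]
  rw [coeff_five_prod_shiftQuot, coeff_four_prod_shiftQuot, coeff_three_prod_shiftQuot,
    coeff_two_prod_shiftQuot, coeff_one_prod_shiftQuot]
  simp only [card_univ, Fintype.card_fin, powerSum_shiftedPart, pow_one, shiftedPowerSum_one hsum,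
    sum_neg_succ_add_half, sum_neg_succ_add_half_sq, sum_neg_succ_add_half_pow_three,
    sum_neg_succ_add_half_pow_four]
  ring

end Partition

theorem statement2_general (d : ℕ) (lam : Fin d → ℕ) (hsum : (∑ i, lam i) = d) :
    charValue 2 d lam = shiftedPowerSum d lam 2 / 2 ∧
    charValue 3 d lam =
      shiftedPowerSum d lam 3 / 3 - shiftedPowerSum d lam 1 ^ 2 / 2 +
        (5 / 12) * shiftedPowerSum d lam 1 ∧
    charValue 4 d lam =
      shiftedPowerSum d lam 4 / 4 - shiftedPowerSum d lam 1 * shiftedPowerSum d lam 2 +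
        (11 / 8) * shiftedPowerSum d lam 2 :=
  ⟨charValue_two hsum, charValue_three hsum, charValue_four hsum⟩

/-- The explicit polynomials `φ₂ = Y₂/2`, `φ₃ = Y₃/3 − Y₁²/2 + (5/12)Y₁`,
`φ₄ = Y₄/4 − Y₁Y₂ + (11/8)Y₂` expressing the normalized character value. -/
theorem statement2 (d : ℕ) (hd : 1 ≤ d) (lam : Fin d → ℕ)
    (hmono : ∀ i j : Fin d, i ≤ j → lam j ≤ lam i) (hsum : (∑ i, lam i) = d) :
    charValue 2 d lam = shiftedPowerSum d lam 2 / 2 ∧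
    charValue 3 d lam =
      shiftedPowerSum d lam 3 / 3 - shiftedPowerSum d lam 1 ^ 2 / 2 +
        (5 / 12) * shiftedPowerSum d lam 1 ∧
    charValue 4 d lam =
      shiftedPowerSum d lam 4 / 4 - shiftedPowerSum d lam 1 * shiftedPowerSum d lam 2 +
        (11 / 8) * shiftedPowerSum d lam 2 :=
  statement2_general d lam hsum
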